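/- For the chain with merged ring contacts (ℓ₂ = 0, ℓ₃ = 2π), suppose 2A is not an integer and k > 0. If a(k) = 0 and b(k) = 0 hold simultaneously, then k = ℓ⁻¹. Moreover, at k = ℓ⁻¹ one has a(k) = b(k) = c(k) = 0 if and only if A + ℓ⁻¹ is an integer. -/

import Mathlib

open Real

/-- The function `a` of the Floquet spectral condition of the magnetic ring
chain with merged ring contacts (`ℓ₂ = 0`, `ℓ₃ = 2π`), with vertex coupling
parameter `ℓ`, connecting-link length `ℓ₁`, and magnetic potential `A`. -/
noncomputable def mergedA (ℓ A k : ℝ) : ℝ :=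
  2 * k * ℓ * Real.sin (2 * A * π) + (k ^ 2 * ℓ ^ 2 + 1) * Real.sin (2 * k * π)

/-- The function `b` of the Floquet spectral condition of the merged-contacts chain. -/
noncomputable def mergedB (ℓ A k : ℝ) : ℝ :=
  2 * k * ℓ * (Real.cos (2 * A * π) - Real.cos (2 * k * π))

/-- The function `c` of the Floquet spectral condition of the merged-contacts chain. -/
noncomputable def mergedC (ℓ ℓ₁ A k : ℝ) : ℝ :=
  2 * k * ℓ * Real.sin (2 * A * π) * Real.cos (k * ℓ₁)
    - (k ^ 2 * ℓ ^ 2 + 1) * (Real.cos (2 * A * π) * Real.sin (k * ℓ₁)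
      - Real.sin (k * (ℓ₁ + 2 * π)))

lemma sinA_ne_zero (A : ℝ) (hA : ¬∃ j : ℤ, 2 * A = j) : Real.sin (2 * A * π) ≠ 0 := by
  intro h
  rw [Real.sin_eq_zero_iff] at h
  obtain ⟨n, hn⟩ := h
  exact hA ⟨n, by
    have := Real.pi_ne_zero
    field_simp at hn
    linarith⟩

theorem stmt_11 (ℓ : ℝ) (hℓ : 0 < ℓ) (ℓ₁ : ℝ) (hℓ₁ : 0 < ℓ₁)
    (A : ℝ) (hA : ¬∃ j : ℤ, 2 * A = j) :
    (∀ k : ℝ, 0 < k → mergedA ℓ A k = 0 → mergedB ℓ A k = 0 → k = ℓ⁻¹)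
    ∧ ((mergedA ℓ A ℓ⁻¹ = 0 ∧ mergedB ℓ A ℓ⁻¹ = 0 ∧ mergedC ℓ ℓ₁ A ℓ⁻¹ = 0) ↔
        ∃ m : ℤ, A + ℓ⁻¹ = m) := by
  have hs := sinA_ne_zero A hA
  have hs2 : 0 < Real.sin (2 * A * π) ^ 2 := by positivity
  have hkl : ℓ⁻¹ * ℓ = 1 := inv_mul_cancel₀ hℓ.ne'
  constructor
  · intro k hk ha hb
    simp only [mergedA] at ha
    simp only [mergedB] at hb
    have h2kl : (2 : ℝ) * k * ℓ ≠ 0 := by positivity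
    have hcos : Real.cos (2 * A * π) = Real.cos (2 * k * π) := by
      have := mul_eq_zero.mp hb
      rcases this with h | h
      · exact absurd h h2kl
      · linarith [sub_eq_zero.mp h]
    have hpy1 := Real.sin_sq_add_cos_sq (2 * A * π)
    have hpy2 := Real.sin_sq_add_cos_sq (2 * k * π)
    have hsin2 : Real.sin (2 * k * π) ^ 2 = Real.sin (2 * A * π) ^ 2 := by
      rw [hcos] at hpy1; linarith
    have hsq : (2 * k * ℓ * Real.sin (2 * A * π)) ^ 2
        = ((k ^ 2 * ℓ ^ 2 + 1) * Real.sin (2 * k * π)) ^ 2 := by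
      have : 2 * k * ℓ * Real.sin (2 * A * π)
          = -((k ^ 2 * ℓ ^ 2 + 1) * Real.sin (2 * k * π)) := by linarith
      rw [this, neg_sq]
    have h0 : (k ^ 2 * ℓ ^ 2 - 1) ^ 2 * Real.sin (2 * A * π) ^ 2 = 0 := by
      linear_combination -hsq - (k ^ 2 * ℓ ^ 2 + 1) ^ 2 * hsin2
    have h1 : k ^ 2 * ℓ ^ 2 = 1 := by
      rcases mul_eq_zero.mp h0 with h | h
      · have := pow_eq_zero_iff (n := 2) (by norm_num) |>.mp h
        linarith
      · exact absurd h hs2.ne'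
    have hkl1 : k * ℓ = 1 := by
      have h2 : (k * ℓ - 1) * (k * ℓ + 1) = 0 := by linear_combination h1
      rcases mul_eq_zero.mp h2 with h | h
      · linarith
      · nlinarith [mul_pos hk hℓ]
    field_simp
    linarith
  · have hL2 : ℓ⁻¹ ^ 2 * ℓ ^ 2 + 1 = 2 := by
      rw [← mul_pow, hkl]; norm_num
    have hK2 : (2 : ℝ) * ℓ⁻¹ * ℓ = 2 := by
      rw [mul_assoc, hkl]; norm_num
    constructor
    · rintro ⟨ha, hb, -⟩
      simp only [mergedA] at ha
      simp only [mergedB] at hb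
      rw [hL2] at ha
      rw [hK2] at ha hb
      have hcos : Real.cos (2 * A * π) = Real.cos (2 * ℓ⁻¹ * π) := by linarith
      have hsin : Real.sin (2 * ℓ⁻¹ * π) = -Real.sin (2 * A * π) := by linarith
      have hone : Real.cos (2 * (A + ℓ⁻¹) * π) = 1 := by
        have : 2 * (A + ℓ⁻¹) * π = 2 * A * π + 2 * ℓ⁻¹ * π := by ring
        rw [this, Real.cos_add, hsin, ← hcos]
        nlinarith [Real.sin_sq_add_cos_sq (2 * A * π)]
      rw [Real.cos_eq_one_iff] at hone
      obtain ⟨n, hn⟩ := hone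
      refine ⟨n, ?_⟩
      have hπ := Real.pi_ne_zero
      have : ((n : ℝ) - (A + ℓ⁻¹)) * (2 * π) = 0 := by ring_nf; ring_nf at hn; linarith
      rcases mul_eq_zero.mp this with h | h
      · linarith
      · exact absurd h (by positivity)
    · rintro ⟨m, hm⟩
      have hinv : (ℓ⁻¹ : ℝ) = m - A := by linarith
      have hsin : Real.sin (2 * ℓ⁻¹ * π) = -Real.sin (2 * A * π) := by
        have : 2 * ℓ⁻¹ * π = -(2 * A * π) + m * (2 * π) := by rw [hinv]; ring
        rw [this, Real.sin_add_int_mul_two_pi, Real.sin_neg]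
      have hcos : Real.cos (2 * ℓ⁻¹ * π) = Real.cos (2 * A * π) := by
        have : 2 * ℓ⁻¹ * π = -(2 * A * π) + m * (2 * π) := by rw [hinv]; ring
        rw [this, Real.cos_add_int_mul_two_pi, Real.cos_neg]
      have hsinc : Real.sin (ℓ⁻¹ * (ℓ₁ + 2 * π))
          = Real.sin (ℓ⁻¹ * ℓ₁) * Real.cos (2 * A * π)
            - Real.cos (ℓ⁻¹ * ℓ₁) * Real.sin (2 * A * π) := by
        have : ℓ⁻¹ * (ℓ₁ + 2 * π) = (ℓ⁻¹ * ℓ₁ - 2 * A * π) + m * (2 * π) := by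
          rw [hinv]; ring
        rw [this, Real.sin_add_int_mul_two_pi, Real.sin_sub]
      refine ⟨?_, ?_, ?_⟩
      · simp only [mergedA]; rw [hL2, hK2, hsin]; ring
      · simp only [mergedB]; rw [hK2, hcos]; ring
      · simp only [mergedC]; rw [hL2, hK2, hsinc]; ring
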